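/- Let T be a directed tree with V° ≠ ∅. If S_λ is a hyponormal weighted shift on T all of whose weights λ_v (v ∈ V°) are nonzero, then T is leafless (every vertex has at least one child); in particular, S_λ is injective and V is infinite and countable. -/

import Mathlib

open MeasureTheory ENNReal
open scoped NNReal
noncomputable section

/-- `μ` is a representing measure of the sequence `t`. -/
def IsRepMeasure (μ : Measure ℝ≥0) (t : ℕ → ℝ) : Prop :=
  ∀ n : ℕ, Integrable (fun s : ℝ≥0 => (s : ℝ) ^ n) μ ∧ t n = ∫ s, (s : ℝ) ^ n ∂μ

/-- `t` is a Stieltjes moment sequence. -/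
def IsStieltjesMoment (t : ℕ → ℝ) : Prop := ∃ μ : Measure ℝ≥0, IsRepMeasure μ t

/-- `t` is a determinate Stieltjes moment sequence. -/
def IsDetStieltjesMoment (t : ℕ → ℝ) : Prop := ∃! μ : Measure ℝ≥0, IsRepMeasure μ t

section Operators

universe u
variable {H : Type u} [NormedAddCommGroup H] [InnerProductSpace ℂ H]

/-- The maximal domain of the composition `S ∘ T`. -/
def compDomain (S T : H →ₗ.[ℂ] H) : Submodule ℂ H where
  carrier := {x | ∃ hx : x ∈ T.domain, T ⟨x, hx⟩ ∈ S.domain}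
  zero_mem' := ⟨T.domain.zero_mem, by
    have h0 : (⟨0, T.domain.zero_mem⟩ : T.domain) = 0 := rfl
    rw [h0, LinearPMap.map_zero]; exact S.domain.zero_mem⟩
  add_mem' := by
    rintro x y ⟨hx, hx'⟩ ⟨hy, hy'⟩
    refine ⟨T.domain.add_mem hx hy, ?_⟩
    have : (⟨x + y, T.domain.add_mem hx hy⟩ : T.domain) = ⟨x, hx⟩ + ⟨y, hy⟩ := rfl
    rw [this, LinearPMap.map_add]
    exact S.domain.add_mem hx' hy'
  smul_mem' := by
    rintro c x ⟨hx, hx'⟩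
    refine ⟨T.domain.smul_mem c hx, ?_⟩
    have : (⟨c • x, T.domain.smul_mem c hx⟩ : T.domain) = c • (⟨x, hx⟩ : T.domain) := rfl
    rw [this, LinearPMap.map_smul]
    exact S.domain.smul_mem c hx'

/-- Composition `S ∘ T` of partial operators, on the maximal domain. -/
def pmapComp (S T : H →ₗ.[ℂ] H) : H →ₗ.[ℂ] H :=
  S.comp (T.domRestrict (compDomain S T)) (by
    rintro ⟨x, hx⟩
    have hxT : x ∈ T.domain := (Submodule.mem_inf.mp hx).2
    have hxD : x ∈ compDomain S T := (Submodule.mem_inf.mp hx).1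
    show T ⟨x, hxT⟩ ∈ S.domain
    exact hxD.choose_spec)

/-- Powers of a partial operator: `pmapPow S n = Sⁿ` with its natural domain. -/
def pmapPow (S : H →ₗ.[ℂ] H) : ℕ → (H →ₗ.[ℂ] H)
  | 0 => LinearMap.id.toPMap ⊤
  | n + 1 => pmapComp (pmapPow S n) S

open Classical in
/-- Total (junk-valued) application of the power `Sⁿ`. -/
def powApp (S : H →ₗ.[ℂ] H) (n : ℕ) (x : H) : H :=
  if h : x ∈ (pmapPow S n).domain then (pmapPow S n) ⟨x, h⟩ else 0

/-- The set of `C^∞`-vectors of `S`. -/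
def Dinf (S : H →ₗ.[ℂ] H) : Set H := {x | ∀ n : ℕ, x ∈ (pmapPow S n).domain}

/-- `F` is a core of `S`. -/
def IsCore (S : H →ₗ.[ℂ] H) (F : Submodule ℂ H) : Prop :=
  F ≤ S.domain ∧ (S.graph : Set (H × H)) ⊆ closure ((S.domRestrict F).graph : Set (H × H))

end Operators
section Operators
universe u
variable {H : Type u} [NormedAddCommGroup H] [InnerProductSpace ℂ H]

/-- A normal (unbounded) operator: closed, densely defined, with `D(N*) = D(N)` and
`‖N* x‖ = ‖N x‖` on the common domain. -/
def IsNormalOp [CompleteSpace H] (N : H →ₗ.[ℂ] H) : Prop :=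
  Dense (N.domain : Set H) ∧ N.IsClosed ∧ N.adjoint.domain = N.domain ∧
    ∀ (x : H) (hx : x ∈ N.domain) (hx' : x ∈ N.adjoint.domain),
      ‖N.adjoint ⟨x, hx'⟩‖ = ‖N ⟨x, hx⟩‖

/-- A subnormal operator: densely defined with a normal extension in a possibly
larger Hilbert space. -/
def IsSubnormal {H : Type u} [NormedAddCommGroup H] [InnerProductSpace ℂ H]
    (S : H →ₗ.[ℂ] H) : Prop :=
  Dense (S.domain : Set H) ∧
  ∃ (K : Type u) (_ : NormedAddCommGroup K) (_ : InnerProductSpace ℂ K) (_ : CompleteSpace K)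
    (J : H →ₗᵢ[ℂ] K) (N : K →ₗ.[ℂ] K), IsNormalOp N ∧
      ∀ x : S.domain, ∃ hx : J x ∈ N.domain, N ⟨J x, hx⟩ = J (S x)

/-- A hyponormal operator. -/
def IsHyponormal [CompleteSpace H] (S : H →ₗ.[ℂ] H) : Prop :=
  Dense (S.domain : Set H) ∧
  ∀ (x : H) (hx : x ∈ S.domain), ∃ hx' : x ∈ S.adjoint.domain,
      ‖S.adjoint ⟨x, hx'⟩‖ ≤ ‖S ⟨x, hx⟩‖

end Operators

/-- A directed tree on the vertex set `V`: a connected directed graph without circuits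
in which every non-root vertex has a unique parent. -/
structure DirectedTree (V : Type*) where
  edge : V → V → Prop
  connected : ∀ u v : V, Relation.ReflTransGen (fun a b => edge a b ∨ edge b a) u v
  no_circuits : ∀ v : V, ¬ Relation.TransGen edge v v
  parent_unique : ∀ u v w : V, edge v u → edge w u → v = w

namespace DirectedTree

variable {V : Type*}

/-- The roots: vertices with no incoming edge. -/
def isRoot (T : DirectedTree V) (v : V) : Prop := ¬ ∃ u : V, T.edge u v

/-- `V°`: the non-root vertices, i.e. vertices having a parent. -/
def nonRoot (T : DirectedTree V) (v : V) : Prop := ∃ u : V, T.edge u v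

open Classical in
/-- The parent function (with junk value at roots). -/
def par (T : DirectedTree V) (v : V) : V := if h : ∃ u : V, T.edge u v then h.choose else v

/-- The set of children of a vertex. -/
def chi (T : DirectedTree V) (u : V) : Set V := {v | T.edge u v}

/-- Iterated children `Chi^n(u)`. -/
def chiN (T : DirectedTree V) : ℕ → V → Set V
  | 0, u => {u}
  | n + 1, u => ⋃ w ∈ T.chiN n u, T.chi w

/-- The descendants of `u`. -/
def des (T : DirectedTree V) (u : V) : Set V := ⋃ n : ℕ, T.chiN n u

/-- `T` is leafless: every vertex has a child. -/
def Leafless (T : DirectedTree V) : Prop := ∀ u : V, ∃ v : V, T.edge u v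

/-- The product `λ_{u∣v} = ∏_{j=0}^{n-1} λ_{par^j(v)}` of the weights along the path of
length `n` ending at `v` (for `v ∈ Chi^n(u)` this is the usual `λ_{u∣v}`). -/
def pathProd (T : DirectedTree V) (lam : V → ℂ) (n : ℕ) (v : V) : ℂ :=
  ∏ j ∈ Finset.range n, lam (T.par^[j] v)

open Classical in
/-- The formal weighted-shift transformation `Λ_T` on families of complex numbers. -/
def lamMap (T : DirectedTree V) (lam : V → ℂ) (f : V → ℂ) : V → ℂ :=
  fun v => if T.nonRoot v then lam v * f (T.par v) else 0

variable (T : DirectedTree V)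

theorem lamMap_add (lam : V → ℂ) (f g : V → ℂ) :
    T.lamMap lam (f + g) = T.lamMap lam f + T.lamMap lam g := by
  funext v; simp only [lamMap, Pi.add_apply]; split <;> ring

theorem lamMap_smul (lam : V → ℂ) (c : ℂ) (f : V → ℂ) :
    T.lamMap lam (c • f) = c • T.lamMap lam f := by
  funext v; simp only [lamMap, Pi.smul_apply, smul_eq_mul]; split <;> ring

theorem lamMap_zero (lam : V → ℂ) : T.lamMap lam (0 : V → ℂ) = 0 := by
  funext v; simp [lamMap]

/-- The domain of the weighted shift `S_λ`. -/
def shiftDomain (lam : V → ℂ) : Submodule ℂ (lp (fun _ : V => ℂ) 2) where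
  carrier := {f | Memℓp (T.lamMap lam f) 2}
  zero_mem' := by
    rw [Set.mem_setOf_eq, lp.coeFn_zero, lamMap_zero]
    exact zero_memℓp
  add_mem' := by
    intro f g hf hg
    rw [Set.mem_setOf_eq, lp.coeFn_add, lamMap_add]
    exact hf.add hg
  smul_mem' := by
    intro c f hf
    rw [Set.mem_setOf_eq, lp.coeFn_smul, lamMap_smul]
    exact hf.const_smul c

/-- The weighted shift `S_λ` on the directed tree `T`, as a partial operator in `ℓ²(V)`. -/
def shift (lam : V → ℂ) : lp (fun _ : V => ℂ) 2 →ₗ.[ℂ] lp (fun _ : V => ℂ) 2 where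
  domain := T.shiftDomain lam
  toFun :=
    { toFun := fun f => (⟨T.lamMap lam f, f.2⟩ : lp (fun _ : V => ℂ) 2)
      map_add' := by
        rintro f g
        apply lp.ext
        rw [lp.coeFn_add]
        show T.lamMap lam
            ((((f : lp (fun _ : V => ℂ) 2) : V → ℂ)) + (((g : lp (fun _ : V => ℂ) 2) : V → ℂ)))
          = T.lamMap lam ((f : lp (fun _ : V => ℂ) 2) : V → ℂ)
            + T.lamMap lam ((g : lp (fun _ : V => ℂ) 2) : V → ℂ)
        exact T.lamMap_add lam _ _
      map_smul' := by
        rintro c f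
        apply lp.ext
        rw [lp.coeFn_smul]
        show T.lamMap lam (c • (((f : lp (fun _ : V => ℂ) 2) : V → ℂ)))
          = c • T.lamMap lam ((f : lp (fun _ : V => ℂ) 2) : V → ℂ)
        exact T.lamMap_smul lam c _ }

end DirectedTree

open Classical in
/-- The basis vector `e_u` of `ℓ²(V)`. -/
def eVec {V : Type*} (u : V) : lp (fun _ : V => ℂ) 2 := lp.single 2 u 1

section MoreDefs
universe u
variable {H : Type u} [NormedAddCommGroup H] [InnerProductSpace ℂ H]

/-- The inner product, linear in the FIRST argument (the paper's convention). -/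
def innerPaper (x y : H) : ℂ := inner ℂ y x

/-- The moment sequence `n ↦ ‖Sⁿ f‖²` generated by the vector `f`. -/
def momentSeq (S : H →ₗ.[ℂ] H) (f : H) : ℕ → ℝ := fun n => ‖powApp S n f‖ ^ 2

/-- `f` is a quasi-analytic vector of `S` : `f ∈ D^∞(S)` and
`∑ₙ ‖Sⁿ f‖^{-1/n} = ∞` (with `1/0 = ∞`). -/
def IsQuasiAnalyticVec (S : H →ₗ.[ℂ] H) (f : H) : Prop :=
  (∀ n : ℕ, f ∈ (pmapPow S n).domain) ∧
  ∑' n : ℕ, ((‖powApp S (n + 1) f‖₊ ^ ((1 : ℝ) / (n + 1)) : ℝ≥0) : ℝ≥0∞)⁻¹ = ∞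

end MoreDefs

/-- The consistency condition `μ_u(σ) = ∑_{v ∈ Chi(u)} |λ_v|² ∫_σ (1/s) dμ_v(s) + ε_u δ₀(σ)`
at the vertex `u` (with the convention `1/0 = ∞`). -/
def consistentAt {V : Type*} (T : DirectedTree V) (lam : V → ℂ) (μ : V → MeasureTheory.Measure ℝ≥0)
    (ε : V → ℝ≥0) (u : V) : Prop :=
  ∀ σ : Set ℝ≥0, MeasurableSet σ →
    μ u σ = (∑' v : {v : V // T.edge u v},
        (‖lam (v : V)‖₊ : ℝ≥0∞) ^ 2 * ∫⁻ s in σ, ((s : ℝ≥0∞))⁻¹ ∂(μ (v : V)))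
      + (ε u : ℝ≥0∞) * MeasureTheory.Measure.dirac (0 : ℝ≥0) σ

/-- The sequence `{ϑ, t₀, t₁, t₂, …}` obtained by prepending `ϑ` to `t`. -/
def shiftedSeq (ϑ : ℝ) (t : ℕ → ℝ) : ℕ → ℝ := fun n => match n with
  | 0 => ϑ
  | n + 1 => t n

/-- A positive definite sequence of real numbers. -/
def IsPosDefSeq (t : ℕ → ℝ) : Prop :=
  ∀ (n : ℕ) (α : ℕ → ℂ),
    0 ≤ (∑ k ∈ Finset.range (n + 1), ∑ l ∈ Finset.range (n + 1),
        (t (k + l) : ℂ) * α k * (starRingEnd ℂ) (α l)).re ∧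
    (∑ k ∈ Finset.range (n + 1), ∑ l ∈ Finset.range (n + 1),
        (t (k + l) : ℂ) * α k * (starRingEnd ℂ) (α l)).im = 0


/-! A leaf `u` with a parent `p` would give `S e_u = 0`, hence `S* e_u = 0` by hyponormality,
i.e. `λ_u f(p) = ⟨S f, e_u⟩ = 0` for all `f ∈ D(S)`; density of `D(S)` produces an `f` with
`f(p) ≠ 0`. A childless root is excluded by connectivity and `V° ≠ ∅`. Once `T` is leafless,
following children gives an infinite path (there are no circuits), and `S f = 0` forces `f = 0`
coordinatewise. For countability, an `f ∈ D(S)` with `f(u) ≠ 0` makes `Chi(u)` lie in the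
support of the square-summable `Λ_T f`, so every vertex has countably many neighbours, and `V`
is the connected component of any vertex. -/

namespace Relation

variable {α : Type*} {r : α → α → Prop}

theorem countable_setOf_reflTransGen (hr : ∀ a, {b | r a b}.Countable) (a : α) :
    {b | ReflTransGen r a b}.Countable := by
  set step : Set α → Set α := fun s => ⋃ x ∈ s, {y | r x y}
  have hstep : ∀ n, (step^[n] {a}).Countable := by
    intro n
    induction n with
    | zero => exact Set.countable_singleton a
    | succ n ih =>
      rw [Function.iterate_succ_apply']
      exact ih.biUnion fun x _ => hr x
  refine (Set.countable_iUnion hstep).mono fun b hb => ?_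
  induction hb with
  | refl => exact Set.mem_iUnion.2 ⟨0, rfl⟩
  | tail _ hbc ih =>
    obtain ⟨n, hn⟩ := Set.mem_iUnion.1 ih
    refine Set.mem_iUnion.2 ⟨n + 1, ?_⟩
    rw [Function.iterate_succ_apply']
    exact Set.mem_biUnion hn hbc

theorem infinite_of_irrefl_transGen_of_serial [Nonempty α] (hr : ∀ a, ¬ TransGen r a a)
    (hserial : ∀ a, ∃ b, r a b) : Infinite α := by
  by_contra hfin
  rw [not_infinite_iff_finite] at hfin
  have : Std.Irrefl (flip (TransGen r)) := ⟨hr⟩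
  have : IsTrans α (flip (TransGen r)) := ⟨fun _ _ _ hab hbc => hbc.trans hab⟩
  obtain ⟨m, -, hm⟩ := (Finite.wellFounded_of_trans_of_irrefl (flip (TransGen r))).has_min
    Set.univ Set.univ_nonempty
  obtain ⟨b, hb⟩ := hserial m
  exact hm b trivial (TransGen.single hb)

end Relation

section Hyponormal

variable {H : Type*} [NormedAddCommGroup H] [InnerProductSpace ℂ H] [CompleteSpace H]

theorem IsHyponormal.inner_apply_eq_zero_of_apply_eq_zero {S : H →ₗ.[ℂ] H}
    (hS : IsHyponormal S) {x : S.domain} (hx : S x = 0) (y : S.domain) :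
    inner ℂ (x : H) (S y) = 0 := by
  obtain ⟨hx', hle⟩ := hS.2 x x.2
  have hadj : S.adjoint ⟨x, hx'⟩ = 0 := norm_le_zero_iff.1 (by simpa [hx] using hle)
  rw [← LinearPMap.adjoint_isFormalAdjoint hS.1 ⟨x, hx'⟩ y, hadj, inner_zero_left]

end Hyponormal

section lp

variable {α : Type*} {p : ℝ≥0∞}

theorem lp.exists_apply_ne_zero_of_dense {E : α → Type*} [∀ i, NormedAddCommGroup (E i)]
    [Fact (1 ≤ p)] {s : Set (lp E p)} (hs : Dense s) (i : α) [Nontrivial (E i)] :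
    ∃ f ∈ s, f i ≠ 0 := by
  classical
  obtain ⟨x, hx⟩ := exists_ne (0 : E i)
  have hopen : IsOpen {f : lp E p | f i ≠ 0} :=
    isOpen_ne_fun ((continuous_apply i).comp lp.uniformContinuous_coe.continuous)
      continuous_const
  exact hs.exists_mem_open hopen
    ⟨lp.single p i x, show (lp.single p i x : lp E p) i ≠ 0 by rwa [lp.single_apply_self]⟩

theorem Memℓp.countable_support {E : Type*} [NormedAddCommGroup E] {f : α → E}
    (hf : Memℓp f p) (hp : 0 < p.toReal) :
    (Function.support f).Countable := by
  refine ((memℓp_gen_iff hp).1 hf).countable_support.mono fun i hi => ?_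
  simpa [Function.mem_support, hp.ne'] using hi

end lp

namespace DirectedTree

variable {V : Type*} (T : DirectedTree V) (lam : V → ℂ)

theorem par_eq_of_edge {u v : V} (h : T.edge u v) : T.par v = u := by
  have hex : ∃ w, T.edge w v := ⟨u, h⟩
  rw [par, dif_pos hex]
  exact T.parent_unique v _ u hex.choose_spec h

theorem lamMap_apply_of_edge (f : V → ℂ) {u v : V} (h : T.edge u v) :
    T.lamMap lam f v = lam v * f u := by
  rw [lamMap, if_pos ⟨u, h⟩, T.par_eq_of_edge h]

theorem countable_setOf_edge (v : V) : {u | T.edge u v}.Countable :=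
  Set.Subsingleton.countable fun _ hu _ hw => T.parent_unique v _ _ hu hw

theorem eq_of_isolated {u : V} (hpar : ¬ T.nonRoot u) (hchi : ∀ v, ¬ T.edge u v) (v : V) :
    v = u := by
  rcases (T.connected u v).cases_head with h | ⟨w, h | h, -⟩
  · exact h.symm
  · exact absurd h (hchi w)
  · exact absurd ⟨w, h⟩ hpar

theorem coe_shift_apply (f : (T.shift lam).domain) : ⇑(T.shift lam f) = T.lamMap lam f := rfl

theorem exists_shift_eVec_eq_zero {u : V} (hu : ∀ v, ¬ T.edge u v) :
    ∃ h : eVec u ∈ (T.shift lam).domain, T.shift lam ⟨eVec u, h⟩ = 0 := by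
  classical
  have hzero : T.lamMap lam ⇑(eVec u : lp (fun _ : V => ℂ) 2) = 0 := by
    funext v
    by_cases hv : T.nonRoot v
    · obtain ⟨w, hw⟩ := hv
      have hwu : w ≠ u := fun h => hu v (h ▸ hw)
      rw [T.lamMap_apply_of_edge lam _ hw, eVec, lp.single_apply_ne 2 u 1 hwu, mul_zero,
        Pi.zero_apply]
    · simp [lamMap, hv]
  refine ⟨show Memℓp _ 2 by rw [hzero]; exact zero_memℓp, ?_⟩
  exact lp.ext (T.coe_shift_apply lam _ ▸ hzero)

theorem leafless_of_isHyponormal (hV : ∃ v : V, T.nonRoot v)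
    (hnz : ∀ v : V, T.nonRoot v → lam v ≠ 0) (hhyp : IsHyponormal (T.shift lam)) :
    T.Leafless := by
  classical
  intro u
  by_contra! hu
  obtain ⟨p, hp⟩ : T.nonRoot u := by
    by_contra hroot
    obtain ⟨v, hv⟩ := hV
    exact hroot (T.eq_of_isolated hroot hu v ▸ hv)
  obtain ⟨he, hSe⟩ := T.exists_shift_eVec_eq_zero lam hu
  obtain ⟨f, hf, hfp⟩ := lp.exists_apply_ne_zero_of_dense hhyp.1 p
  have horth := hhyp.inner_apply_eq_zero_of_apply_eq_zero hSe ⟨f, hf⟩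
  change inner ℂ (eVec u) _ = 0 at horth
  rw [eVec, lp.inner_single_left, T.coe_shift_apply, T.lamMap_apply_of_edge lam _ hp] at horth
  simp only [RCLike.inner_apply, map_one, mul_one] at horth
  exact mul_ne_zero (hnz u ⟨p, hp⟩) hfp horth

theorem shift_eq_zero_of_leafless (hnz : ∀ v : V, T.nonRoot v → lam v ≠ 0) (hT : T.Leafless)
    (x : (T.shift lam).domain) (hx : T.shift lam x = 0) : x = 0 := by
  refine Subtype.ext (lp.ext (funext fun w => ?_))
  obtain ⟨v, hv⟩ := hT w
  have hxv := congr_fun (congr_arg (⇑) hx) v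
  rw [T.coe_shift_apply, T.lamMap_apply_of_edge lam _ hv] at hxv
  simpa using (mul_eq_zero.1 hxv).resolve_left (hnz v ⟨w, hv⟩)

theorem countable_chi_of_dense (hnz : ∀ v : V, T.nonRoot v → lam v ≠ 0)
    (hd : Dense ((T.shift lam).domain : Set (lp (fun _ : V => ℂ) 2))) (u : V) :
    (T.chi u).Countable := by
  obtain ⟨f, hf, hfu⟩ := lp.exists_apply_ne_zero_of_dense hd u
  refine (Memℓp.countable_support (hf : Memℓp (T.lamMap lam f) 2) (by norm_num)).mono
    fun v hv => ?_
  rw [Function.mem_support, T.lamMap_apply_of_edge lam _ hv]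
  exact mul_ne_zero (hnz v ⟨u, hv⟩) hfu

theorem countable_of_countable_chi (hchi : ∀ u, (T.chi u).Countable) : Countable V := by
  rcases isEmpty_or_nonempty V with hV | ⟨⟨v₀⟩⟩
  · infer_instance
  rw [← Set.countable_univ_iff]
  exact (Relation.countable_setOf_reflTransGen
    (fun u => (hchi u).union (T.countable_setOf_edge u)) v₀).mono fun v _ => T.connected v₀ v

end DirectedTree

/-- a hyponormal weighted shift with nonzero weights on a directed tree
with `V° ≠ ∅` lives on a leafless tree; in particular it is injective and the vertex set
is countably infinite. -/
theorem stmt18 {V : Type*} (T : DirectedTree V) (hV : ∃ v : V, T.nonRoot v)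
    (lam : V → ℂ) (hnz : ∀ v : V, T.nonRoot v → lam v ≠ 0)
    (hhyp : IsHyponormal (T.shift lam)) :
    T.Leafless
    ∧ (∀ x : (T.shift lam).domain, T.shift lam x = 0 → x = 0)
    ∧ Infinite V ∧ Countable V := by
  have hleaf := T.leafless_of_isHyponormal lam hV hnz hhyp
  obtain ⟨v₀, -⟩ := hV
  have : Nonempty V := ⟨v₀⟩
  exact ⟨hleaf, T.shift_eq_zero_of_leafless lam hnz hleaf,
    Relation.infinite_of_irrefl_transGen_of_serial T.no_circuits hleaf,
    T.countable_of_countable_chi (T.countable_chi_of_dense lam hnz hhyp.1)⟩
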